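/- Let E be a real inner product space, let ξ ∈ E with ‖ξ‖ = 1, let δ(t) = tanh(t/2)·ξ for t ≥ 0, and let p, x be points of the open unit ball of E with x ≠ p. Set z = (−p) ⊕_M x. Then the function t ↦ d_B(x,p) · (d_B(z, δ(t)) − t) / ‖z‖ tends to −(d_B(x,p)/‖z‖) · log((1 − ‖z‖²) / ‖z − ξ‖²) as t → ∞. (That is, the signed distance from x to the hyperplane H_{ξ,p} = {y : B_ξ((−p) ⊕_M y) = 0}, defined as d̄(x, H_{ξ,p}) = d_B(x,p) · B_ξ((−p) ⊕_M x) / ‖(−p) ⊕_M x‖ with B_ξ the Busemann function of δ, equals −(d_B(x,p)/‖(−p) ⊕_M x‖) · log((1 − ‖(−p) ⊕_M x‖²)/‖(−p) ⊕_M x − ξ‖²).) -/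

import Mathlib

open Filter
open scoped RealInnerProductSpace

/-- The inverse hyperbolic cosine `arcosh x = log (x + √(x² − 1))`. -/
noncomputable def arcosh (x : ℝ) : ℝ := Real.log (x + Real.sqrt (x ^ 2 - 1))

/-- The Poincaré distance on the open unit ball of a real inner product space:
`d_B(x, y) = arcosh (1 + 2‖x − y‖² / ((1 − ‖x‖²)(1 − ‖y‖²)))`. -/
noncomputable def poincareDist {E : Type*} [NormedAddCommGroup E]
    [InnerProductSpace ℝ E] (x y : E) : ℝ :=
  arcosh (1 + 2 * ‖x - y‖ ^ 2 / ((1 - ‖x‖ ^ 2) * (1 - ‖y‖ ^ 2)))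

/-- The Möbius addition
`x ⊕_M y = ((1 + 2⟪x,y⟫ + ‖y‖²) x + (1 − ‖x‖²) y) / (1 + 2⟪x,y⟫ + ‖x‖²‖y‖²)`
on the open unit ball of a real inner product space. -/
noncomputable def mobiusAdd {E : Type*} [NormedAddCommGroup E]
    [InnerProductSpace ℝ E] (x y : E) : E :=
  (1 + 2 * ⟪x, y⟫ + ‖x‖ ^ 2 * ‖y‖ ^ 2)⁻¹ •
    ((1 + 2 * ⟪x, y⟫ + ‖y‖ ^ 2) • x + (1 - ‖x‖ ^ 2) • y)

lemma aux_tanh_half (t : ℝ) :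
    Real.tanh (t / 2) = (1 - Real.exp (-t)) / (1 + Real.exp (-t)) := by
  rw [Real.tanh_eq_sinh_div_cosh, Real.sinh_eq, Real.cosh_eq]
  have h1 : Real.exp (t / 2) * Real.exp (-(t / 2)) = 1 := by
    rw [← Real.exp_add]; ring_nf; exact Real.exp_zero
  have h2 : Real.exp (-(t / 2)) * Real.exp (-(t / 2)) = Real.exp (-t) := by
    rw [← Real.exp_add]; ring_nf
  have hp1 : 0 < Real.exp (t / 2) + Real.exp (-(t / 2)) := by positivity
  have hp2 : 0 < 1 + Real.exp (-t) := by positivity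
  rw [div_eq_div_iff (by positivity) hp2.ne']
  nlinarith [Real.exp_pos (-(t/2))]

lemma aux_one_sub_tanh_sq (s : ℝ) :
    1 - Real.tanh s ^ 2 = 1 / Real.cosh s ^ 2 := by
  have hc := Real.cosh_pos s
  have h := Real.cosh_sq_sub_sinh_sq s
  rw [Real.tanh_eq_sinh_div_cosh]
  field_simp
  exact h

lemma aux_tanh_sq_lt_one (s : ℝ) : Real.tanh s ^ 2 < 1 := by
  have := aux_one_sub_tanh_sq s
  have hc := Real.cosh_pos s
  nlinarith [one_div_pos.mpr (pow_pos hc 2)]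

lemma aux_exp_cosh (t : ℝ) :
    Real.exp (-t) * Real.cosh (t / 2) ^ 2 = ((1 + Real.exp (-t)) / 2) ^ 2 := by
  rw [Real.cosh_eq]
  have h1 : Real.exp (t / 2) * Real.exp (-(t / 2)) = 1 := by
    rw [← Real.exp_add]; ring_nf; exact Real.exp_zero
  have h2 : Real.exp (-(t / 2)) * Real.exp (-(t / 2)) = Real.exp (-t) := by
    rw [← Real.exp_add]; ring_nf
  nlinarith [Real.exp_pos (-(t/2)), Real.exp_pos (t/2)]

lemma aux_tendsto_tanh : Tendsto (fun t : ℝ => Real.tanh (t / 2)) atTop (nhds 1) := by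
  have h0 : Tendsto (fun t : ℝ => Real.exp (-t)) atTop (nhds 0) := by
    simpa using Real.tendsto_exp_neg_atTop_nhds_zero
  have : Tendsto (fun t : ℝ => (1 - Real.exp (-t)) / (1 + Real.exp (-t))) atTop
      (nhds ((1 - 0) / (1 + 0))) :=
    (tendsto_const_nhds.sub h0).div (tendsto_const_nhds.add h0) (by norm_num)
  simpa [aux_tanh_half] using this

/-- Busemann limit on the Poincaré ball. -/
lemma aux_busemann {E : Type*} [NormedAddCommGroup E] [InnerProductSpace ℝ E]
    (z ξ : E) (hz : ‖z‖ < 1) (hξ : ‖ξ‖ = 1) :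
    Tendsto (fun t : ℝ => poincareDist z (Real.tanh (t / 2) • ξ) - t) atTop
      (nhds (Real.log (‖z - ξ‖ ^ 2 / (1 - ‖z‖ ^ 2)))) := by
  have hz2 : (0 : ℝ) < 1 - ‖z‖ ^ 2 := by nlinarith [norm_nonneg z]
  have hzξ : z ≠ ξ := by
    rintro rfl; rw [hξ] at hz; exact lt_irrefl _ hz
  have hd : (0 : ℝ) < ‖z - ξ‖ ^ 2 := by
    have h : z - ξ ≠ 0 := sub_ne_zero.mpr hzξ
    exact pow_pos (norm_pos_iff.mpr h) 2
  set L : ℝ := ‖z - ξ‖ ^ 2 / (1 - ‖z‖ ^ 2) with hLdef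
  have hL : 0 < L := div_pos hd hz2
  -- abbreviations
  set u : ℝ → ℝ := fun t =>
    1 + 2 * ‖z - Real.tanh (t / 2) • ξ‖ ^ 2 /
      ((1 - ‖z‖ ^ 2) * (1 - ‖Real.tanh (t / 2) • ξ‖ ^ 2)) with hudef
  have hnorm : ∀ t : ℝ, ‖Real.tanh (t / 2) • ξ‖ ^ 2 = Real.tanh (t / 2) ^ 2 := by
    intro t; rw [norm_smul, hξ]; simp [mul_pow, sq_abs]
  have htsq : ∀ t : ℝ, (0 : ℝ) < 1 - Real.tanh (t / 2) ^ 2 := fun t => by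
    have := aux_tanh_sq_lt_one (t / 2); linarith
  have hu1 : ∀ t : ℝ, 1 ≤ u t := by
    intro t
    have : 0 ≤ 2 * ‖z - Real.tanh (t / 2) • ξ‖ ^ 2 /
        ((1 - ‖z‖ ^ 2) * (1 - ‖Real.tanh (t / 2) • ξ‖ ^ 2)) := by
      apply div_nonneg (by positivity)
      rw [hnorm]
      exact le_of_lt (mul_pos hz2 (htsq t))
    simp only [hudef]; linarith
  -- limit of the squared norm
  have h0 : Tendsto (fun t : ℝ => Real.exp (-t)) atTop (nhds 0) := by
    simpa using Real.tendsto_exp_neg_atTop_nhds_zero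
  have hB : Tendsto (fun t : ℝ => ‖z - Real.tanh (t / 2) • ξ‖ ^ 2) atTop
      (nhds (‖z - ξ‖ ^ 2)) := by
    have h1 : Tendsto (fun t : ℝ => Real.tanh (t / 2) • ξ) atTop (nhds ξ) := by
      simpa using aux_tendsto_tanh.smul_const ξ
    exact ((tendsto_const_nhds.sub h1).norm.pow 2)
  -- limit of exp(-t) / (1 - tanh²(t/2))
  have hC : Tendsto (fun t : ℝ => Real.exp (-t) / (1 - Real.tanh (t / 2) ^ 2)) atTop
      (nhds (1 / 4)) := by
    have heq : ∀ t : ℝ, Real.exp (-t) / (1 - Real.tanh (t / 2) ^ 2)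
        = ((1 + Real.exp (-t)) / 2) ^ 2 := by
      intro t
      rw [aux_one_sub_tanh_sq, ← aux_exp_cosh t]
      have hc := Real.cosh_pos (t / 2)
      field_simp
    have : Tendsto (fun t : ℝ => ((1 + Real.exp (-t)) / 2) ^ 2) atTop
        (nhds (((1 + 0) / 2) ^ 2)) :=
      (((tendsto_const_nhds.add h0).div_const 2).pow 2)
    rw [funext heq]
    convert this using 2
    norm_num
  -- limit of u t * exp (-t)
  have hUE : Tendsto (fun t : ℝ => u t * Real.exp (-t)) atTop (nhds (L / 2)) := by
    have heq : ∀ t : ℝ, u t * Real.exp (-t)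
        = Real.exp (-t) + 2 * ‖z - Real.tanh (t / 2) • ξ‖ ^ 2 *
            (Real.exp (-t) / (1 - Real.tanh (t / 2) ^ 2)) / (1 - ‖z‖ ^ 2) := by
      intro t
      have h1 := htsq t
      simp only [hudef, hnorm]
      field_simp
    have : Tendsto (fun t : ℝ => Real.exp (-t) + 2 * ‖z - Real.tanh (t / 2) • ξ‖ ^ 2 *
        (Real.exp (-t) / (1 - Real.tanh (t / 2) ^ 2)) / (1 - ‖z‖ ^ 2)) atTop
        (nhds (0 + 2 * ‖z - ξ‖ ^ 2 * (1 / 4) / (1 - ‖z‖ ^ 2))) :=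
      h0.add ((((hB.const_mul 2).mul hC).div_const (1 - ‖z‖ ^ 2)))
    rw [funext heq]
    convert this using 2
    rw [hLdef]; ring
  -- limit of sqrt(u² - 1) * exp(-t)
  have hSE : Tendsto (fun t : ℝ => Real.sqrt (u t ^ 2 - 1) * Real.exp (-t)) atTop
      (nhds (L / 2)) := by
    have heq : ∀ t : ℝ, Real.sqrt (u t ^ 2 - 1) * Real.exp (-t)
        = Real.sqrt ((u t * Real.exp (-t)) ^ 2 - Real.exp (-t) ^ 2) := by
      intro t
      rw [show (u t * Real.exp (-t)) ^ 2 - Real.exp (-t) ^ 2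
          = (u t ^ 2 - 1) * Real.exp (-t) ^ 2 by ring,
        Real.sqrt_mul (by nlinarith [hu1 t]), Real.sqrt_sq (Real.exp_pos (-t)).le]
    have hsq : Tendsto (fun t : ℝ => (u t * Real.exp (-t)) ^ 2 - Real.exp (-t) ^ 2)
        atTop (nhds ((L / 2) ^ 2 - 0 ^ 2)) := (hUE.pow 2).sub (h0.pow 2)
    have := hsq.sqrt
    rw [funext heq]
    convert this using 2
    rw [show (L / 2) ^ 2 - 0 ^ 2 = (L / 2) ^ 2 by ring,
      Real.sqrt_sq (by positivity)]
  -- limit of (u + sqrt(u²-1)) * exp(-t)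
  have hG : Tendsto (fun t : ℝ => (u t + Real.sqrt (u t ^ 2 - 1)) * Real.exp (-t)) atTop
      (nhds L) := by
    have : Tendsto (fun t : ℝ => u t * Real.exp (-t) + Real.sqrt (u t ^ 2 - 1) * Real.exp (-t))
        atTop (nhds (L / 2 + L / 2)) := hUE.add hSE
    rw [show L / 2 + L / 2 = L by ring] at this
    convert this using 2 with t
    ring
  -- take logs
  have hfin := (Real.continuousAt_log hL.ne').tendsto.comp hG
  have heq : ∀ t : ℝ, poincareDist z (Real.tanh (t / 2) • ξ) - t
      = Real.log ((u t + Real.sqrt (u t ^ 2 - 1)) * Real.exp (-t)) := by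
    intro t
    have hgpos : 0 < u t + Real.sqrt (u t ^ 2 - 1) := by
      have := hu1 t
      have := Real.sqrt_nonneg (u t ^ 2 - 1)
      linarith
    rw [Real.log_mul hgpos.ne' (Real.exp_pos (-t)).ne', Real.log_exp]
    simp only [poincareDist, arcosh, hudef]
    ring
  rw [funext heq]
  exact hfin

lemma aux_norm_mobius_lt_one {E : Type*} [NormedAddCommGroup E] [InnerProductSpace ℝ E]
    (x y : E) (hx : ‖x‖ < 1) (hy : ‖y‖ < 1) : ‖mobiusAdd x y‖ < 1 := by
  set c : ℝ := ⟪x, y⟫ with hc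
  set A : ℝ := ‖x‖ ^ 2 with hA
  set B : ℝ := ‖y‖ ^ 2 with hB
  have hA0 : 0 ≤ A := by positivity
  have hB0 : 0 ≤ B := by positivity
  have hA1 : A < 1 := by nlinarith [norm_nonneg x]
  have hB1 : B < 1 := by nlinarith [norm_nonneg y]
  have hcs : |c| ≤ ‖x‖ * ‖y‖ := abs_real_inner_le_norm x y
  have hcs2 : c ^ 2 ≤ A * B := by
    rw [hA, hB]
    nlinarith [abs_nonneg c, norm_nonneg x, norm_nonneg y, sq_abs c]
  have hm : ‖x‖ * ‖y‖ < 1 := by nlinarith [norm_nonneg x, norm_nonneg y]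
  have hAB : A * B = (‖x‖ * ‖y‖) ^ 2 := by rw [hA, hB]; ring
  have hD : 0 < 1 + 2 * c + A * B := by
    nlinarith [sq_nonneg (1 - ‖x‖ * ‖y‖), abs_le.mp hcs, hm, hAB]
  have hnormsq : ‖mobiusAdd x y‖ ^ 2 = (1 + 2 * c + A * B)⁻¹ ^ 2 *
      ((1 + 2 * c + B) ^ 2 * A + 2 * (1 + 2 * c + B) * (1 - A) * c + (1 - A) ^ 2 * B) := by
    rw [mobiusAdd, norm_smul, mul_pow, norm_add_sq_real]
    rw [norm_smul, norm_smul, real_inner_smul_left, real_inner_smul_right]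
    simp only [Real.norm_eq_abs, mul_pow, sq_abs, ← hc, ← hA, ← hB]
    ring
  have hkey : (1 - ‖mobiusAdd x y‖ ^ 2) * (1 + 2 * c + A * B) ^ 2
      = (1 + 2 * c + A * B) * (1 - A) * (1 - B) := by
    rw [hnormsq]
    field_simp
    ring
  have hpos : 0 < (1 + 2 * c + A * B) * (1 - A) * (1 - B) := by
    apply mul_pos (mul_pos hD (by linarith)) (by linarith)
  have h2 : 0 < 1 - ‖mobiusAdd x y‖ ^ 2 := by
    nlinarith [sq_nonneg (1 + 2 * c + A * B)]
  nlinarith [norm_nonneg (mobiusAdd x y)]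

/-- Let `E` be a real inner product space, `ξ ∈ E` with `‖ξ‖ = 1`,
`δ t = tanh (t/2) • ξ`, and `p, x` in the open unit ball of `E` with `x ≠ p`.  Set
`z = (−p) ⊕_M x`.  Then `t ↦ d_B(x,p) · (d_B(z, δ t) − t) / ‖z‖` tends to
`−(d_B(x,p)/‖z‖) · log ((1 − ‖z‖²)/‖z − ξ‖²)` as `t → ∞`; i.e. the signed distance
from `x` to the hyperplane `H_{ξ,p}` equals
`−(d_B(x,p)/‖(−p) ⊕_M x‖) · log ((1 − ‖(−p) ⊕_M x‖²)/‖(−p) ⊕_M x − ξ‖²)`. -/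
theorem poincare_point_to_hyperplane {E : Type*} [NormedAddCommGroup E]
    [InnerProductSpace ℝ E] (ξ : E) (hξ : ‖ξ‖ = 1) (p x : E)
    (hp : ‖p‖ < 1) (hx : ‖x‖ < 1) (hxp : x ≠ p) :
    Tendsto
      (fun t : ℝ =>
        poincareDist x p *
          (poincareDist (mobiusAdd (-p) x) (Real.tanh (t / 2) • ξ) - t) /
          ‖mobiusAdd (-p) x‖)
      atTop
      (nhds (-(poincareDist x p / ‖mobiusAdd (-p) x‖) *
        Real.log ((1 - ‖mobiusAdd (-p) x‖ ^ 2) / ‖mobiusAdd (-p) x - ξ‖ ^ 2))) := by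
  set z : E := mobiusAdd (-p) x with hzdef
  have hz : ‖z‖ < 1 := aux_norm_mobius_lt_one (-p) x (by simpa using hp) hx
  have hz2 : (0 : ℝ) < 1 - ‖z‖ ^ 2 := by nlinarith [norm_nonneg z]
  have hzξ : z ≠ ξ := by rintro rfl; rw [hξ] at hz; exact lt_irrefl _ hz
  have hd : (0 : ℝ) < ‖z - ξ‖ ^ 2 := by
    have h : z - ξ ≠ 0 := sub_ne_zero.mpr hzξ
    exact pow_pos (norm_pos_iff.mpr h) 2
  have hbus := aux_busemann z ξ hz hξ
  have := (hbus.const_mul (poincareDist x p)).div_const ‖z‖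
  convert this using 2
  rw [Real.log_div hd.ne' hz2.ne', Real.log_div hz2.ne' hd.ne']
  ring
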